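/- arXiv:2503.11779 — 6 statements merged into one kernel-verified Lean document; each statement's English description precedes it below -/
import Mathlib

section
/- For any real numbers a < b and ε > 0, there exist no C² functions L, M, N : (a,b)×(−ε,ε) → ℝ satisfying on the whole domain the Gauss equation L·N − M² = 0 and the Codazzi equations ∂₂L = ∂₁M and ∂₂M = ∂₁N, together with the initial data L(x₁,0) = 0, M(x₁,0) = 0 and N(x₁,0) = x₁ for every x₁ ∈ (a,b). -/
/-!
Along the initial line `L = M = 0` and `N = x₁`, so `∂₁M = 0` and `∂₁N = 1`, and by Codazzi
`∂₂L = 0` and `∂₂M = 1` there. Differentiating the Gauss equation once in `x₂` and substituting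
the Codazzi equations gives `∂₁M · N + L · ∂₂N = 2 M · ∂₁N` on the whole domain. Differentiating
this once more in `x₂` and evaluating on the line, where `∂₂∂₁M = ∂₁∂₂M = 0` by symmetry of second
derivatives, leaves `0 = 2 (∂₁N)² = 2`.
-/

/-- The standard basis of ℝ² (as pairs). -/
noncomputable def E2 : Fin 2 → ℝ × ℝ := ![(1, 0), (0, 1)]

/-- The `i`-th partial derivative of a scalar function on ℝ². -/
noncomputable def sp (i : Fin 2) (f : ℝ × ℝ → ℝ) (z : ℝ × ℝ) : ℝ :=
  fderiv ℝ f z (E2 i)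

open Filter Topology Set

lemma HasDerivAt.eq_of_eventuallyEq {f g : ℝ → ℝ} {f' g' x : ℝ} (hf : HasDerivAt f f' x)
    (hg : HasDerivAt g g' x) (hfg : ∀ᶠ s in 𝓝 x, f s = g s) : f' = g' :=
  hf.unique (hg.congr_of_eventuallyEq hfg)

section PartialDerivatives

variable {f : ℝ × ℝ → ℝ} {x t : ℝ}

lemma hasDerivAt_sp_zero (hf : DifferentiableAt ℝ f (x, t)) :
    HasDerivAt (fun s => f (s, t)) (sp 0 f (x, t)) x := by
  simpa [sp, E2, Function.comp_def] using
    hf.hasFDerivAt.comp_hasDerivAt x ((hasDerivAt_id x).prodMk (hasDerivAt_const x t))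

lemma hasDerivAt_sp_one (hf : DifferentiableAt ℝ f (x, t)) :
    HasDerivAt (fun s => f (x, s)) (sp 1 f (x, t)) t := by
  simpa [sp, E2, Function.comp_def] using
    hf.hasFDerivAt.comp_hasDerivAt t ((hasDerivAt_const t x).prodMk (hasDerivAt_id t))

lemma sp_zero_eq_of_eqOn {g : ℝ → ℝ} {g' : ℝ} {s : Set ℝ} (hs : IsOpen s) (hx : x ∈ s)
    (hf : DifferentiableAt ℝ f (x, t)) (hfg : ∀ y ∈ s, f (y, t) = g y) (hg : HasDerivAt g g' x) :
    sp 0 f (x, t) = g' :=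
  (hasDerivAt_sp_zero hf).eq_of_eventuallyEq hg (eventually_of_mem (hs.mem_nhds hx) hfg)

lemma ContDiffAt.differentiableAt_sp {z : ℝ × ℝ} (hf : ContDiffAt ℝ 2 f z) (i : Fin 2) :
    DifferentiableAt ℝ (sp i f) z :=
  ((hf.fderiv_right (m := 1) le_rfl).differentiableAt one_ne_zero).clm_apply
    (differentiableAt_const _)

lemma ContDiffAt.sp_comm {z : ℝ × ℝ} (hf : ContDiffAt ℝ 2 f z) (i j : Fin 2) :
    sp i (sp j f) z = sp j (sp i f) z := by
  have hdf : DifferentiableAt ℝ (fderiv ℝ f) z :=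
    (hf.fderiv_right (m := 1) le_rfl).differentiableAt one_ne_zero
  have hsp (i j : Fin 2) : sp i (sp j f) z = fderiv ℝ (fderiv ℝ f) z (E2 i) (E2 j) := by
    change fderiv ℝ (fun w => fderiv ℝ f w (E2 j)) z (E2 i) = _
    rw [fderiv_clm_apply hdf (differentiableAt_const _)]
    simp
  rw [hsp, hsp]
  exact (hf.isSymmSndFDerivAt (by simp)).eq _ _

end PartialDerivatives

/-- The Gauss–Codazzi system for the flat metric, with second fundamental form `[[L, M], [M, N]]`. -/
structure IsGaussCodazziSolution (U : Set (ℝ × ℝ)) (L M N : ℝ × ℝ → ℝ) : Prop where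
  gauss : ∀ z ∈ U, L z * N z - M z ^ 2 = 0
  codazzi_one : ∀ z ∈ U, sp 1 L z = sp 0 M z
  codazzi_two : ∀ z ∈ U, sp 1 M z = sp 0 N z

lemma eventually_mem_vertical {U : Set (ℝ × ℝ)} (hU : IsOpen U) {x t : ℝ} (hz : (x, t) ∈ U) :
    ∀ᶠ s in 𝓝 t, (x, s) ∈ U :=
  (continuous_const.prodMk continuous_id).continuousAt.preimage_mem_nhds (hU.mem_nhds hz)

namespace IsGaussCodazziSolution

variable {U : Set (ℝ × ℝ)} {L M N : ℝ × ℝ → ℝ}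

lemma sp_one_gauss (h : IsGaussCodazziSolution U L M N) (hU : IsOpen U)
    (hL : DifferentiableOn ℝ L U) (hM : DifferentiableOn ℝ M U) (hN : DifferentiableOn ℝ N U)
    {z : ℝ × ℝ} (hz : z ∈ U) : sp 0 M z * N z + L z * sp 1 N z = 2 * (M z * sp 0 N z) := by
  obtain ⟨x, t⟩ := z
  have hd {f : ℝ × ℝ → ℝ} (hf : DifferentiableOn ℝ f U) :=
    hasDerivAt_sp_one ((hf _ hz).differentiableAt (hU.mem_nhds hz))
  have hderiv := (((hd hL).mul (hd hN)).sub ((hd hM).pow 2)).eq_of_eventuallyEq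
    (hasDerivAt_const t 0) ((eventually_mem_vertical hU hz).mono fun s hs => h.gauss _ hs)
  rw [h.codazzi_one _ hz, h.codazzi_two _ hz] at hderiv
  linear_combination hderiv

lemma sp_one_sp_one_gauss (h : IsGaussCodazziSolution U L M N) (hU : IsOpen U)
    (hL : ContDiffOn ℝ 2 L U) (hM : ContDiffOn ℝ 2 M U) (hN : ContDiffOn ℝ 2 N U)
    {z : ℝ × ℝ} (hz : z ∈ U) :
    sp 1 (sp 0 M) z * N z + 2 * (sp 0 M z * sp 1 N z) + L z * sp 1 (sp 1 N) z =
      2 * (sp 0 N z ^ 2 + M z * sp 1 (sp 0 N) z) := by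
  obtain ⟨x, t⟩ := z
  have hC {f : ℝ × ℝ → ℝ} (hf : ContDiffOn ℝ 2 f U) := hf.contDiffAt (hU.mem_nhds hz)
  have hd {f : ℝ × ℝ → ℝ} (hf : ContDiffOn ℝ 2 f U) :=
    hasDerivAt_sp_one ((hC hf).differentiableAt two_ne_zero)
  have hd' {f : ℝ × ℝ → ℝ} (hf : ContDiffOn ℝ 2 f U) (i : Fin 2) :=
    hasDerivAt_sp_one ((hC hf).differentiableAt_sp i)
  have hderiv := (((hd' hM 0).mul (hd hN)).add ((hd hL).mul (hd' hN 1))).eq_of_eventuallyEq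
    (((hd hM).mul (hd' hN 0)).const_mul 2)
    ((eventually_mem_vertical hU hz).mono fun s hs =>
      h.sp_one_gauss hU (hL.differentiableOn two_ne_zero)
        (hM.differentiableOn two_ne_zero) (hN.differentiableOn two_ne_zero) hs)
  rw [h.codazzi_one _ hz, h.codazzi_two _ hz] at hderiv
  linear_combination hderiv

end IsGaussCodazziSolution

/-- there are no C² solutions `L, M, N` on `(a,b)×(−ε,ε)` of the
Gauss–Codazzi system `LN − M² = 0`, `∂₂L = ∂₁M`, `∂₂M = ∂₁N` with initial data
`L(x₁,0) = 0`, `M(x₁,0) = 0`, `N(x₁,0) = x₁`. -/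
theorem stmt3 (a b ε : ℝ) (hab : a < b) (hε : 0 < ε)
    (L M N : ℝ × ℝ → ℝ)
    (hL : ContDiffOn ℝ 2 L (Set.Ioo a b ×ˢ Set.Ioo (-ε) ε))
    (hM : ContDiffOn ℝ 2 M (Set.Ioo a b ×ˢ Set.Ioo (-ε) ε))
    (hN : ContDiffOn ℝ 2 N (Set.Ioo a b ×ˢ Set.Ioo (-ε) ε))
    (hGauss : ∀ z ∈ Set.Ioo a b ×ˢ Set.Ioo (-ε) ε, L z * N z - M z ^ 2 = 0)
    (hCod1 : ∀ z ∈ Set.Ioo a b ×ˢ Set.Ioo (-ε) ε, sp 1 L z = sp 0 M z)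
    (hCod2 : ∀ z ∈ Set.Ioo a b ×ˢ Set.Ioo (-ε) ε, sp 1 M z = sp 0 N z)
    (hinit : ∀ x ∈ Set.Ioo a b, L (x, 0) = 0 ∧ M (x, 0) = 0 ∧ N (x, 0) = x) :
    False := by
  have hU : IsOpen (Ioo a b ×ˢ Ioo (-ε) ε) := isOpen_Ioo.prod isOpen_Ioo
  have h0 : (0 : ℝ) ∈ Ioo (-ε) ε := ⟨neg_neg_iff_pos.2 hε, hε⟩
  have hC {f : ℝ × ℝ → ℝ} (hf : ContDiffOn ℝ 2 f (Ioo a b ×ˢ Ioo (-ε) ε)) {x : ℝ}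
      (hx : x ∈ Ioo a b) : ContDiffAt ℝ 2 f (x, 0) :=
    hf.contDiffAt (hU.mem_nhds (mk_mem_prod hx h0))
  have hMx : ∀ x ∈ Ioo a b, sp 0 M (x, 0) = 0 := fun x hx =>
    sp_zero_eq_of_eqOn isOpen_Ioo hx ((hC hM hx).differentiableAt two_ne_zero)
      (fun y hy => (hinit y hy).2.1) (hasDerivAt_const x 0)
  have hNx : ∀ x ∈ Ioo a b, sp 0 N (x, 0) = 1 := fun x hx =>
    sp_zero_eq_of_eqOn isOpen_Ioo hx ((hC hN hx).differentiableAt two_ne_zero)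
      (fun y hy => (hinit y hy).2.2) (hasDerivAt_id x)
  obtain ⟨x₀, hx₀⟩ : (Ioo a b).Nonempty := nonempty_Ioo.2 hab
  have hMxt : sp 1 (sp 0 M) (x₀, 0) = 0 := by
    rw [(hC hM hx₀).sp_comm]
    exact sp_zero_eq_of_eqOn isOpen_Ioo hx₀ ((hC hM hx₀).differentiableAt_sp 1)
      (fun y hy => (hCod2 _ ⟨hy, h0⟩).trans (hNx y hy)) (hasDerivAt_const x₀ 1)
  have key := (IsGaussCodazziSolution.mk hGauss hCod1 hCod2).sp_one_sp_one_gauss hU hL hM hN (mk_mem_prod hx₀ h0)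
  rw [hMxt, hMx x₀ hx₀, hNx x₀ hx₀, (hinit x₀ hx₀).1, (hinit x₀ hx₀).2.1] at key
  norm_num at key
end

section
/- Let c₂ ≥ c₁ > 0 and c₀ > 0. Let Q : Sym₂(ℝ) → ℝ be a quadratic form with c₁‖M‖² ≤ Q(M) ≤ c₂‖M‖² for all M ∈ Sym₂(ℝ), let α⁺, α⁻ ≥ c₀, and let A ∈ Sym₂(ℝ) have eigenvalues κ₁, κ₂ with |κ₁| ≤ |κ₂|. Define f(M) = Q(M − A) + α⁺·max(det M, 0) + α⁻·max(−det M, 0). Then f attains its minimum over Sym₂(ℝ), and there exists a constant c > 0 depending only on c₁, c₂, c₀ (in particular not on A, α⁺, α⁻) such that c·κ₁² ≤ min_{M ∈ Sym₂(ℝ)} f(M) ≤ c₂·κ₁². -/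
/-!
A minimiser exists because `f M ≥ c₁ ‖M - A‖²` on symmetric matrices, so `f` is coercive there.

Upper bound: if `v` is an eigenvector of `A` for `κ₁` and `P` the orthogonal projection onto
`ℝ v`, then `M = A - κ₁ P` annihilates `v`, so `det M = 0` and `f M = Q (-κ₁ P) ≤ c₂ κ₁²`.

Lower bound: conjugating by an orthogonal matrix that diagonalises `A` preserves `‖M - A‖` and
`det M`, so we may take `A = diag(l₁, l₂)`, where `l₁, l₂ ∈ {κ₁, κ₂}` both have modulus at least
`|κ₁|`. Either `‖M - A‖² ≥ κ₁² / 16`, or the diagonal entries of `M` have modulus at least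
`3|κ₁|/4` while the off-diagonal one is small, and then `|det M| ≥ κ₁² / 16`.
-/

open Matrix

/-- The Frobenius norm of a real 2×2 matrix. -/
noncomputable def frob2 (A : Matrix (Fin 2) (Fin 2) ℝ) : ℝ :=
  Real.sqrt (∑ i, ∑ j, A i j ^ 2)

instance Matrix.instIsModuleTopology {m n R : Type*} [Finite m] [Finite n] [TopologicalSpace R]
    [Semiring R] [IsTopologicalSemiring R] : IsModuleTopology R (Matrix m n R) :=
  IsModuleTopology.instPi

section UnitaryConj

variable {n R : Type*} [Fintype n] [DecidableEq n] [CommRing R] [StarRing R] {U : Matrix n n R}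

theorem Matrix.trace_star_mul_mul (hU : U ∈ unitary (Matrix n n R)) (X : Matrix n n R) :
    trace (star U * X * U) = trace X := by
  rw [trace_mul_cycle, Unitary.mul_star_self_of_mem hU, one_mul]

theorem Matrix.det_star_mul_mul (hU : U ∈ unitary (Matrix n n R)) (X : Matrix n n R) :
    det (star U * X * U) = det X := by
  rw [det_mul, det_mul, mul_right_comm, ← det_mul, Unitary.star_mul_self_of_mem hU, det_one,
    one_mul]

end UnitaryConj

theorem Matrix.IsSymm.exists_star_mul_mul_eq_diagonal {n : Type*} [Fintype n] [DecidableEq n]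
    {M : Matrix n n ℝ} (hM : M.IsSymm) :
    ∃ U ∈ unitary (Matrix n n ℝ), ∃ μ : n → ℝ, star U * M * U = diagonal μ :=
  ⟨_, (IsHermitian.eigenvectorUnitary hM).2, _,
    by simpa using IsHermitian.conjStarAlgAut_star_eigenvectorUnitary hM⟩

theorem frob2_eq_sqrt_trace (X : Matrix (Fin 2) (Fin 2) ℝ) : frob2 X = √(trace (star X * X)) := by
  rw [frob2]
  congr 1
  simp [trace, mul_apply, Fin.sum_univ_two]
  ring

theorem frob2_sq_of_isSymm {X : Matrix (Fin 2) (Fin 2) ℝ} (hX : X.IsSymm) :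
    frob2 X ^ 2 = X 0 0 ^ 2 + 2 * X 0 1 ^ 2 + X 1 1 ^ 2 := by
  rw [frob2, Real.sq_sqrt (by positivity)]
  simp only [Fin.sum_univ_two, hX.apply 0 1]
  ring

theorem frob2_star_mul_mul {U : Matrix (Fin 2) (Fin 2) ℝ}
    (hU : U ∈ unitary (Matrix (Fin 2) (Fin 2) ℝ)) (X : Matrix (Fin 2) (Fin 2) ℝ) :
    frob2 (star U * X * U) = frob2 X := by
  have : star (star U * X * U) * (star U * X * U) = star U * (star X * X) * U := by
    simp only [star_mul, star_star, mul_assoc]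
    rw [← mul_assoc U, Unitary.mul_star_self_of_mem hU, one_mul]
  rw [frob2_eq_sqrt_trace, frob2_eq_sqrt_trace, this, trace_star_mul_mul hU]

theorem frob2_smul_vecMulVec_sq (c : ℝ) (v : Fin 2 → ℝ) :
    frob2 (c • vecMulVec v v) ^ 2 = c ^ 2 * (v ⬝ᵥ v) ^ 2 := by
  rw [frob2, Real.sq_sqrt (by positivity)]
  simp [Fin.sum_univ_two, vecMulVec_apply, dotProduct]
  ring

theorem abs_le_abs_of_add_eq_of_mul_eq {κ₁ κ₂ l₁ l₂ : ℝ} (hs : l₁ + l₂ = κ₁ + κ₂)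
    (hp : l₁ * l₂ = κ₁ * κ₂) (hk : |κ₁| ≤ |κ₂|) : |κ₁| ≤ |l₁| := by
  have : (l₁ - κ₁) * (l₁ - κ₂) = 0 := by linear_combination l₁ * hs - hp
  rcases mul_eq_zero.mp this with h | h
  · rw [sub_eq_zero.mp h]
  · rwa [sub_eq_zero.mp h]

theorem sq_div_sixteen_le_of_le_abs {a b d l₁ l₂ s : ℝ} (hs : 0 ≤ s) (h₁ : s ≤ |l₁|)
    (h₂ : s ≤ |l₂|) :
    s ^ 2 / 16 ≤ (a - l₁) ^ 2 + 2 * b ^ 2 + (d - l₂) ^ 2 + |a * d - b ^ 2| := by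
  by_cases hfar : s ^ 2 / 16 ≤ (a - l₁) ^ 2 + 2 * b ^ 2 + (d - l₂) ^ 2
  · linarith [abs_nonneg (a * d - b ^ 2)]
  push Not at hfar
  have near : ∀ x l, (x - l) ^ 2 ≤ (s / 4) ^ 2 → s ≤ |l| → 3 * s / 4 ≤ |x| := fun x l hx hl => by
    have := abs_le_of_sq_le_sq hx (by positivity)
    have := abs_sub_abs_le_abs_sub l x
    rw [abs_sub_comm] at this
    linarith
  have ha := near a l₁ (by nlinarith [sq_nonneg b, sq_nonneg (d - l₂)]) h₁
  have hd := near d l₂ (by nlinarith [sq_nonneg b, sq_nonneg (a - l₁)]) h₂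
  have had : (3 * s / 4) * (3 * s / 4) ≤ |a * d| := by
    rw [abs_mul]; exact mul_le_mul ha hd (by positivity) (abs_nonneg a)
  have := abs_sub_abs_le_abs_sub (a * d) (b ^ 2)
  rw [abs_of_nonneg (sq_nonneg b)] at this
  nlinarith [sq_nonneg (a - l₁), sq_nonneg (d - l₂)]

theorem sq_div_sixteen_le_frob2_sq_add_abs_det {M A : Matrix (Fin 2) (Fin 2) ℝ} (hM : M.IsSymm)
    (hA : A.IsSymm) {κ₁ κ₂ : ℝ} (htr : κ₁ + κ₂ = A.trace) (hdet : κ₁ * κ₂ = A.det)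
    (hk : |κ₁| ≤ |κ₂|) : κ₁ ^ 2 / 16 ≤ frob2 (M - A) ^ 2 + |M.det| := by
  obtain ⟨U, hU, l, hUA⟩ := hA.exists_star_mul_mul_eq_diagonal
  set M' := star U * M * U
  have hM' : M'.IsSymm := isHermitian_conjTranspose_mul_mul U hM
  have hfrob : frob2 (M - A) = frob2 (M' - diagonal l) := by
    rw [← hUA, ← frob2_star_mul_mul hU (M - A), mul_sub, sub_mul]
  have hdetM : M.det = M' 0 0 * M' 1 1 - M' 0 1 ^ 2 := by
    rw [← det_star_mul_mul hU M]
    change M'.det = _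
    rw [det_fin_two, hM'.apply 0 1, sq]
  have hl : l 0 + l 1 = κ₁ + κ₂ ∧ l 0 * l 1 = κ₁ * κ₂ := by
    rw [htr, hdet, ← trace_star_mul_mul hU A, ← det_star_mul_mul hU A, hUA]
    simp
  have hfrob' : frob2 (M' - diagonal l) ^ 2
      = (M' 0 0 - l 0) ^ 2 + 2 * M' 0 1 ^ 2 + (M' 1 1 - l 1) ^ 2 := by
    rw [frob2_sq_of_isSymm (hM'.sub (isSymm_diagonal l))]
    simp
  rw [← sq_abs κ₁, hfrob, hfrob', hdetM]
  exact sq_div_sixteen_le_of_le_abs (abs_nonneg κ₁)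
    (abs_le_abs_of_add_eq_of_mul_eq hl.1 hl.2 hk)
    (abs_le_abs_of_add_eq_of_mul_eq (l₁ := l 1) (l₂ := l 0) (by linarith [hl.1])
      (by linarith [hl.2]) hk)

theorem exists_isSymm_det_eq_zero_frob2_sq_eq {A : Matrix (Fin 2) (Fin 2) ℝ} (hA : A.IsSymm)
    {κ₁ κ₂ : ℝ} (htr : κ₁ + κ₂ = A.trace) (hdet : κ₁ * κ₂ = A.det) :
    ∃ M : Matrix (Fin 2) (Fin 2) ℝ, M.IsSymm ∧ M.det = 0 ∧ frob2 (M - A) ^ 2 = κ₁ ^ 2 := by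
  have hchar : (A - κ₁ • 1).det = 0 := by
    rw [trace_fin_two] at htr
    rw [det_fin_two] at hdet ⊢
    simp
    linear_combination κ₁ * htr - hdet
  obtain ⟨v, hv, hAv⟩ := exists_mulVec_eq_zero_iff.mpr hchar
  have hvv : v ⬝ᵥ v ≠ 0 := fun h => hv (dotProduct_self_eq_zero.mp h)
  set P := (κ₁ / (v ⬝ᵥ v)) • vecMulVec v v
  refine ⟨A - P, hA.sub (IsSymm.smul (transpose_vecMulVec v v) _), ?_, ?_⟩
  · refine exists_mulVec_eq_zero_iff.mp ⟨v, hv, ?_⟩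
    rw [sub_mulVec, smul_mulVec, one_mulVec, sub_eq_zero] at hAv
    rw [sub_mulVec, smul_mulVec, vecMulVec_mulVec, op_smul_eq_smul, smul_smul,
      div_mul_cancel₀ _ hvv, hAv, sub_self]
  · rw [sub_sub_cancel_left, ← neg_smul, frob2_smul_vecMulVec_sq]
    field_simp

open Filter in
theorem Continuous.exists_forall_le_of_sq_dist_le {X : Type*} [PseudoMetricSpace X]
    [ProperSpace X] {g : X → ℝ} (hg : Continuous g) (x₀ : X) {c : ℝ} (hc : 0 < c)
    (hcoer : ∀ x, c * dist x x₀ ^ 2 ≤ g x) : ∃ x, ∀ y, g x ≤ g y :=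
  haveI : Nonempty X := ⟨x₀⟩
  hg.exists_forall_le <| tendsto_atTop_mono hcoer <|
    ((tendsto_pow_atTop two_ne_zero).const_mul_atTop hc).comp
      (tendsto_dist_right_cocompact_atTop x₀)

def symmMk (v : ℝ × ℝ × ℝ) : Matrix (Fin 2) (Fin 2) ℝ :=
  !![v.1, v.2.1; v.2.1, v.2.2]

theorem continuous_symmMk : Continuous symmMk := by
  unfold symmMk; fun_prop

theorem isSymm_symmMk (v : ℝ × ℝ × ℝ) : (symmMk v).IsSymm := by
  ext i j; fin_cases i <;> fin_cases j <;> rfl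

theorem Matrix.IsSymm.symmMk_eq {M : Matrix (Fin 2) (Fin 2) ℝ} (hM : M.IsSymm) :
    symmMk (M 0 0, M 0 1, M 1 1) = M := by
  ext i j; fin_cases i <;> fin_cases j <;> simp [symmMk, hM.apply 0 1]

theorem dist_sq_le_frob2_symmMk_sub_sq (v w : ℝ × ℝ × ℝ) :
    dist v w ^ 2 ≤ frob2 (symmMk v - symmMk w) ^ 2 := by
  rw [frob2_sq_of_isSymm ((isSymm_symmMk v).sub (isSymm_symmMk w))]
  simp only [symmMk, Matrix.sub_apply, of_apply, cons_val', cons_val_zero, cons_val_fin_one,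
    cons_val_one]
  set S := (v.1 - w.1) ^ 2 + 2 * (v.2.1 - w.2.1) ^ 2 + (v.2.2 - w.2.2) ^ 2
  have hdist : dist v w ≤ √S := by
    simp only [Prod.dist_eq, Real.dist_eq]
    refine max_le (Real.abs_le_sqrt ?_) (max_le (Real.abs_le_sqrt ?_) (Real.abs_le_sqrt ?_)) <;>
      nlinarith [sq_nonneg (v.1 - w.1), sq_nonneg (v.2.1 - w.2.1), sq_nonneg (v.2.2 - w.2.2)]
  calc dist v w ^ 2 ≤ √S ^ 2 := pow_le_pow_left₀ dist_nonneg hdist 2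
    _ = S := Real.sq_sqrt (by positivity)

theorem exists_isSymm_forall_le {g : Matrix (Fin 2) (Fin 2) ℝ → ℝ} (hg : Continuous g)
    {A : Matrix (Fin 2) (Fin 2) ℝ} (hA : A.IsSymm) {c : ℝ} (hc : 0 < c)
    (hcoer : ∀ M, M.IsSymm → c * frob2 (M - A) ^ 2 ≤ g M) :
    ∃ M₀, M₀.IsSymm ∧ ∀ M, M.IsSymm → g M₀ ≤ g M := by
  obtain ⟨v₀, hv₀⟩ := (hg.comp continuous_symmMk).exists_forall_le_of_sq_dist_le
    (A 0 0, A 0 1, A 1 1) hc fun v => calc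
      c * dist v (A 0 0, A 0 1, A 1 1) ^ 2 ≤ c * frob2 (symmMk v - A) ^ 2 := by
        grw [dist_sq_le_frob2_symmMk_sub_sq, hA.symmMk_eq]
      _ ≤ g (symmMk v) := hcoer _ (isSymm_symmMk v)
  exact ⟨symmMk v₀, isSymm_symmMk v₀, fun M hM => hM.symmMk_eq ▸ hv₀ _⟩

theorem mul_abs_le_mul_max_add_mul_max {c αp αm x : ℝ} (hp : c ≤ αp) (hm : c ≤ αm) :
    c * |x| ≤ αp * max x 0 + αm * max (-x) 0 := by
  rcases le_total 0 x with hx | hx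
  · rw [abs_of_nonneg hx, max_eq_left hx, max_eq_right (neg_nonpos.mpr hx)]
    nlinarith
  · rw [abs_of_nonpos hx, max_eq_right hx, max_eq_left (neg_nonneg.mpr hx)]
    nlinarith

theorem stmt6_general (c₁ c₂ c₀ : ℝ) (hc₁ : 0 < c₁) (hc₀ : 0 < c₀) :
    ∃ c : ℝ, 0 < c ∧
      ∀ (Q : Matrix (Fin 2) (Fin 2) ℝ → ℝ)
        (B : Matrix (Fin 2) (Fin 2) ℝ →ₗ[ℝ] Matrix (Fin 2) (Fin 2) ℝ →ₗ[ℝ] ℝ),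
        (∀ X Y, B X Y = B Y X) → (∀ X, Q X = B X X) →
        (∀ M : Matrix (Fin 2) (Fin 2) ℝ, M.IsSymm → c₁ * frob2 M ^ 2 ≤ Q M) →
        (∀ M : Matrix (Fin 2) (Fin 2) ℝ, M.IsSymm → Q M ≤ c₂ * frob2 M ^ 2) →
        ∀ αp αm : ℝ, c₀ ≤ αp → c₀ ≤ αm →
        ∀ A : Matrix (Fin 2) (Fin 2) ℝ, A.IsSymm →
        ∀ κ₁ κ₂ : ℝ, κ₁ + κ₂ = A.trace → κ₁ * κ₂ = A.det → |κ₁| ≤ |κ₂| →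
        ∀ f : Matrix (Fin 2) (Fin 2) ℝ → ℝ,
        (∀ M, f M = Q (M - A) + αp * max M.det 0 + αm * max (-M.det) 0) →
        ∃ M₀ : Matrix (Fin 2) (Fin 2) ℝ, M₀.IsSymm ∧
          (∀ M : Matrix (Fin 2) (Fin 2) ℝ, M.IsSymm → f M₀ ≤ f M) ∧
          c * κ₁ ^ 2 ≤ f M₀ ∧ f M₀ ≤ c₂ * κ₁ ^ 2 := by
  refine ⟨min c₁ c₀ / 16, by positivity, ?_⟩
  intro Q B _ hQB hQl hQu αp αm hαp hαm A hA κ₁ κ₂ htr hdet hk f hf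
  have hf_ge : ∀ M, M.IsSymm → c₁ * frob2 (M - A) ^ 2 + c₀ * |M.det| ≤ f M := fun M hM => by
    rw [hf]
    linarith [hQl _ (hM.sub hA), mul_abs_le_mul_max_add_mul_max (x := M.det) hαp hαm]
  have hf_cont : Continuous f := by
    rw [funext hf, funext hQB]
    fun_prop
  obtain ⟨M₀, hM₀, hmin⟩ := exists_isSymm_forall_le hf_cont hA hc₁ fun M hM => by
    linarith [hf_ge M hM, mul_nonneg hc₀.le (abs_nonneg M.det)]
  refine ⟨M₀, hM₀, hmin, ?_, ?_⟩
  · calc min c₁ c₀ / 16 * κ₁ ^ 2 = min c₁ c₀ * (κ₁ ^ 2 / 16) := by ring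
      _ ≤ min c₁ c₀ * (frob2 (M₀ - A) ^ 2 + |M₀.det|) := by
          gcongr
          exact sq_div_sixteen_le_frob2_sq_add_abs_det hM₀ hA htr hdet hk
      _ ≤ c₁ * frob2 (M₀ - A) ^ 2 + c₀ * |M₀.det| := by
          rw [mul_add]
          gcongr
          exacts [min_le_left _ _, min_le_right _ _]
      _ ≤ f M₀ := hf_ge M₀ hM₀
  · obtain ⟨Mc, hMc, hdet0, hfrob⟩ := exists_isSymm_det_eq_zero_frob2_sq_eq hA htr hdet
    calc f M₀ ≤ f Mc := hmin Mc hMc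
      _ = Q (Mc - A) := by simp [hf, hdet0]
      _ ≤ c₂ * κ₁ ^ 2 := hfrob ▸ hQu _ (hMc.sub hA)

/-- the pointwise wide-ribbon energy
`f(M) = Q(M−A) + α⁺ (det M)⁺ + α⁻ (det M)⁻` attains its minimum over symmetric
matrices, and the minimum is comparable to `κ₁²`, with constants depending only on
`c₁, c₂, c₀`. The eigenvalues `κ₁, κ₂` of the symmetric matrix `A` are encoded by
`κ₁ + κ₂ = tr A`, `κ₁ κ₂ = det A`, `|κ₁| ≤ |κ₂|`. -/
theorem stmt6 (c₁ c₂ c₀ : ℝ) (hc₁ : 0 < c₁) (hc₁₂ : c₁ ≤ c₂) (hc₀ : 0 < c₀) :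
    ∃ c : ℝ, 0 < c ∧
      ∀ (Q : Matrix (Fin 2) (Fin 2) ℝ → ℝ)
        (B : Matrix (Fin 2) (Fin 2) ℝ →ₗ[ℝ] Matrix (Fin 2) (Fin 2) ℝ →ₗ[ℝ] ℝ),
        (∀ X Y, B X Y = B Y X) → (∀ X, Q X = B X X) →
        (∀ M : Matrix (Fin 2) (Fin 2) ℝ, M.IsSymm → c₁ * frob2 M ^ 2 ≤ Q M) →
        (∀ M : Matrix (Fin 2) (Fin 2) ℝ, M.IsSymm → Q M ≤ c₂ * frob2 M ^ 2) →
        ∀ αp αm : ℝ, c₀ ≤ αp → c₀ ≤ αm →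
        ∀ A : Matrix (Fin 2) (Fin 2) ℝ, A.IsSymm →
        ∀ κ₁ κ₂ : ℝ, κ₁ + κ₂ = A.trace → κ₁ * κ₂ = A.det → |κ₁| ≤ |κ₂| →
        ∀ f : Matrix (Fin 2) (Fin 2) ℝ → ℝ,
        (∀ M, f M = Q (M - A) + αp * max M.det 0 + αm * max (-M.det) 0) →
        ∃ M₀ : Matrix (Fin 2) (Fin 2) ℝ, M₀.IsSymm ∧
          (∀ M : Matrix (Fin 2) (Fin 2) ℝ, M.IsSymm → f M₀ ≤ f M) ∧
          c * κ₁ ^ 2 ≤ f M₀ ∧ f M₀ ≤ c₂ * κ₁ ^ 2 :=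
  stmt6_general c₁ c₂ c₀ hc₁ hc₀
end

section
/- Let c₂ ≥ c₁ > 0 and c₀ > 0. Let Q : Sym₂(ℝ) → ℝ be a quadratic form with c₁‖M‖² ≤ Q(M) ≤ c₂‖M‖² for all M ∈ Sym₂(ℝ), let α⁺, α⁻ ≥ c₀, and let A ∈ Sym₂(ℝ) have eigenvalues κ₁, κ₂ with |κ₁| ≤ |κ₂|. Define f(M) = Q(M − A) + α⁺·max(det M, 0) + α⁻·max(−det M, 0). Then there exists a constant c > 0 depending only on c₁, c₂, c₀ such that every minimizer M* of f over Sym₂(ℝ) satisfies ‖M* − A‖ ≥ c·|κ₁|. -/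
/-!
Let `r = ‖M* - A‖` and let `μ₁, μ₂` be the eigenvalues of `M*`, with `|μ₁| ≤ |μ₂|`. Replacing
`μ₁` by `(1 - s) μ₁` in the spectral decomposition of `M*` moves `M*` by `s |μ₁|` and multiplies
`det M*`, hence the penalty, by `1 - s`: a gain of at least `s c₀ |μ₁ μ₂|`, against a growth of
the quadratic term of at most `2 c₂ r s |μ₁| + O(s²)`. Minimality thus forces `c₀ |μ₂| ≤ 2 c₂ r`,
so `c₀ |μ₁| ≤ 2 c₂ r`. Testing `A` on a unit eigenvector of `M*` for `μ₁` gives the Weyl-type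
bound `|κ₁| ≤ |μ₁| + r`, and together `c₀ |κ₁| ≤ (2 c₂ + c₀) r`.
-/

open Matrix

open scoped Matrix.Norms.Frobenius
open WithLp (toLp)

lemma frob2_eq_norm (A : Matrix (Fin 2) (Fin 2) ℝ) : frob2 A = ‖A‖ := by
  simp [frob2, frobenius_norm_def, Real.sqrt_eq_rpow]

namespace Matrix

variable {𝕜 m n : Type*} [RCLike 𝕜] [Fintype m] [Fintype n]

lemma frobenius_norm_toLp_mulVec_le (X : Matrix m n 𝕜) (v : n → 𝕜) :
    ‖toLp 2 (X *ᵥ v)‖ ≤ ‖X‖ * ‖toLp 2 v‖ := by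
  rw [← frobenius_norm_replicateCol (ι := Unit), replicateCol_mulVec,
    ← frobenius_norm_replicateCol (ι := Unit)]
  exact frobenius_norm_mul X _

lemma frobenius_norm_vecMulVec_le (u : m → 𝕜) (w : n → 𝕜) :
    ‖vecMulVec u w‖ ≤ ‖toLp 2 u‖ * ‖toLp 2 w‖ := by
  simpa only [frobenius_norm_replicateCol, frobenius_norm_replicateRow, ← vecMulVec_eq] using
    frobenius_norm_mul (replicateCol Unit u) (replicateRow Unit w)

end Matrix

lemma norm_toLp_sq_fin_two (v : Fin 2 → ℝ) : ‖toLp 2 v‖ ^ 2 = v 0 ^ 2 + v 1 ^ 2 := by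
  simp [EuclideanSpace.real_norm_sq_eq, Fin.sum_univ_two]

lemma quadratic_nonneg_of_mul_eq_sq {u w z : ℝ} (huz : u * z = w ^ 2) (hsum : 0 ≤ u + z)
    (x y : ℝ) : 0 ≤ u * x ^ 2 + 2 * w * x * y + z * y ^ 2 := by
  have key : (u + z) * (u * x ^ 2 + 2 * w * x * y + z * y ^ 2) =
      (u * x + w * y) ^ 2 + (w * x + z * y) ^ 2 := by
    linear_combination (x ^ 2 + y ^ 2) * huz
  rcases hsum.lt_or_eq with hpos | hzero
  · exact (mul_nonneg_iff_of_pos_left hpos).mp (key ▸ by positivity)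
  · have hu : u = 0 := by nlinarith [sq_nonneg w, sq_nonneg u]
    have hw : w = 0 := pow_eq_zero_iff two_ne_zero |>.mp (by rw [← huz, hu, zero_mul])
    obtain rfl : z = 0 := by linarith
    simp [hu, hw]

namespace Matrix

variable {S : Matrix (Fin 2) (Fin 2) ℝ} {μ₁ μ₂ : ℝ}

lemma det_sub_smul_one_fin_two {R : Type*} [CommRing R] {S : Matrix (Fin 2) (Fin 2) R} {μ₁ μ₂ : R}
    (h₁ : μ₁ + μ₂ = S.trace) (h₂ : μ₁ * μ₂ = S.det) (μ : R) :
    (S - μ • 1).det = (μ₁ - μ) * (μ₂ - μ) := by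
  rw [trace_fin_two] at h₁
  rw [det_fin_two] at h₂ ⊢
  simp only [sub_apply, smul_apply, one_apply_eq, one_apply_ne zero_ne_one,
    one_apply_ne one_ne_zero, smul_eq_mul, mul_one, mul_zero, sub_zero]
  linear_combination μ * h₁ - h₂

lemma exists_unit_eigenvector_fin_two (h₁ : μ₁ + μ₂ = S.trace) (h₂ : μ₁ * μ₂ = S.det) :
    ∃ v : Fin 2 → ℝ, ‖toLp 2 v‖ = 1 ∧ S *ᵥ v = μ₁ • v := by
  have hdet : (S - μ₁ • 1).det = 0 := by rw [det_sub_smul_one_fin_two h₁ h₂]; ring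
  obtain ⟨v, hv0, hv⟩ := exists_mulVec_eq_zero_iff.mpr hdet
  have hn : ‖toLp 2 v‖ ≠ 0 := by simpa using hv0
  refine ⟨‖toLp 2 v‖⁻¹ • v, ?_, ?_⟩
  · rw [WithLp.toLp_smul, norm_smul, norm_inv, norm_norm, inv_mul_cancel₀ hn]
  · rw [sub_mulVec, smul_mulVec, one_mulVec, sub_eq_zero] at hv
    rw [mulVec_smul, hv, smul_comm]

lemma IsSymm.exists_eigenvalues_fin_two (hS : S.IsSymm) :
    ∃ μ₁ μ₂ : ℝ, μ₁ + μ₂ = S.trace ∧ μ₁ * μ₂ = S.det ∧ |μ₁| ≤ |μ₂| := by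
  have hsymm : S 1 0 = S 0 1 := hS.apply 0 1
  set D := √((S 0 0 - S 1 1) ^ 2 + 4 * S 0 1 ^ 2)
  have hD : D ^ 2 = (S 0 0 - S 1 1) ^ 2 + 4 * S 0 1 ^ 2 := Real.sq_sqrt (by positivity)
  have hsum : (S.trace - D) / 2 + (S.trace + D) / 2 = S.trace := by ring
  have hprod : (S.trace - D) / 2 * ((S.trace + D) / 2) = S.det := by
    rw [trace_fin_two, det_fin_two, hsymm]; linear_combination (-1 / 4 : ℝ) * hD
  rcases le_total |(S.trace - D) / 2| |(S.trace + D) / 2| with h | h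
  · exact ⟨_, _, hsum, hprod, h⟩
  · exact ⟨_, _, by linarith, by linarith, h⟩

lemma IsSymm.abs_mul_norm_le_norm_mulVec (hS : S.IsSymm) (h₁ : μ₁ + μ₂ = S.trace)
    (h₂ : μ₁ * μ₂ = S.det) (h : |μ₁| ≤ |μ₂|) (v : Fin 2 → ℝ) :
    |μ₁| * ‖toLp 2 v‖ ≤ ‖toLp 2 (S *ᵥ v)‖ := by
  rw [← pow_le_pow_iff_left₀ (by positivity) (norm_nonneg _) two_ne_zero, mul_pow, sq_abs,
    norm_toLp_sq_fin_two, norm_toLp_sq_fin_two]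
  have hsymm : S 1 0 = S 0 1 := hS.apply 0 1
  rw [trace_fin_two] at h₁
  rw [det_fin_two, hsymm] at h₂
  have hsq : μ₁ ^ 2 ≤ μ₂ ^ 2 := sq_le_sq.mpr h
  -- `S² - μ₁² = (μ₁ + μ₂) (S - μ₁)` by Cayley–Hamilton, a singular form with trace `μ₂² - μ₁² ≥ 0`
  have hpsd := quadratic_nonneg_of_mul_eq_sq (u := (μ₁ + μ₂) * (S 0 0 - μ₁))
    (w := (μ₁ + μ₂) * S 0 1) (z := (μ₁ + μ₂) * (S 1 1 - μ₁))
    (by linear_combination ((μ₁ + μ₂) ^ 2 * μ₁) * h₁ - (μ₁ + μ₂) ^ 2 * h₂)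
    (by linear_combination (μ₁ + μ₂) * h₁ + hsq) (v 0) (v 1)
  simp only [mulVec, dotProduct, Fin.sum_univ_two, hsymm]
  linear_combination hpsd + (v 0 ^ 2 * S 0 0 + 2 * v 0 * v 1 * S 0 1 + v 1 ^ 2 * S 1 1) * h₁
    - (v 0 ^ 2 + v 1 ^ 2) * h₂

lemma IsSymm.abs_le_abs_add_norm_sub {A M : Matrix (Fin 2) (Fin 2) ℝ} (hA : A.IsSymm)
    {κ₁ κ₂ : ℝ} (hκ₁ : κ₁ + κ₂ = A.trace) (hκ₂ : κ₁ * κ₂ = A.det) (hκ : |κ₁| ≤ |κ₂|)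
    (hμ₁ : μ₁ + μ₂ = M.trace) (hμ₂ : μ₁ * μ₂ = M.det) :
    |κ₁| ≤ |μ₁| + ‖M - A‖ := by
  obtain ⟨v, hv1, hv⟩ := exists_unit_eigenvector_fin_two hμ₁ hμ₂
  calc |κ₁| = |κ₁| * ‖toLp 2 v‖ := by rw [hv1, mul_one]
    _ ≤ ‖toLp 2 (A *ᵥ v)‖ := hA.abs_mul_norm_le_norm_mulVec hκ₁ hκ₂ hκ v
    _ = ‖toLp 2 (μ₁ • v) - toLp 2 ((M - A) *ᵥ v)‖ := by
      rw [← WithLp.toLp_sub, sub_mulVec, hv, sub_sub_cancel]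
    _ ≤ ‖toLp 2 (μ₁ • v)‖ + ‖toLp 2 ((M - A) *ᵥ v)‖ := norm_sub_le _ _
    _ ≤ |μ₁| + ‖M - A‖ := by
      rw [WithLp.toLp_smul, norm_smul, hv1, Real.norm_eq_abs, mul_one]
      simpa [hv1] using frobenius_norm_toLp_mulVec_le (M - A) v

lemma exists_norm_le_det_sub_eq (h₁ : μ₁ + μ₂ = S.trace) (h₂ : μ₁ * μ₂ = S.det) (τ : ℝ) :
    ∃ N : Matrix (Fin 2) (Fin 2) ℝ, N.IsSymm ∧ ‖N‖ ≤ |τ| ∧ (S - N).det = (μ₁ - τ) * μ₂ := by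
  obtain ⟨v, hv1, hv⟩ := exists_unit_eigenvector_fin_two h₁ h₂
  refine ⟨τ • vecMulVec v v, IsSymm.smul (transpose_vecMulVec v v) τ, ?_, ?_⟩
  · simpa [norm_smul, hv1] using
      mul_le_mul_of_nonneg_left (frobenius_norm_vecMulVec_le v v) (abs_nonneg τ)
  · have hn := norm_toLp_sq_fin_two v
    rw [hv1] at hn
    have e₀ := congrFun hv 0
    have e₁ := congrFun hv 1
    simp only [mulVec, dotProduct, Fin.sum_univ_two, Pi.smul_apply, smul_eq_mul] at e₀ e₁
    rw [trace_fin_two] at h₁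
    rw [det_fin_two] at h₂ ⊢
    simp only [sub_apply, smul_apply, vecMulVec_apply, smul_eq_mul]
    linear_combination -h₂ + τ * (v 0 ^ 2 + v 1 ^ 2) * h₁ + τ * v 0 * e₀ + τ * v 1 * e₁
      + τ * μ₂ * hn

variable (R n : Type*) [CommSemiring R] in
def symmetricSubmodule : Submodule R (Matrix n n R) where
  carrier := {A | A.IsSymm}
  add_mem' := IsSymm.add
  zero_mem' := isSymm_zero
  smul_mem' c _ h := h.smul c

end Matrix

namespace LinearMap.BilinForm

variable {E : Type*} [SeminormedAddCommGroup E] [Module ℝ E] {B : LinearMap.BilinForm ℝ E}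
  {p : Submodule ℝ E} {x y : E}

lemma apply_sq_le_of_nonneg_on (hB : B.IsSymm) (hp : ∀ z ∈ p, 0 ≤ B z z) (hx : x ∈ p)
    (hy : y ∈ p) : B x y ^ 2 ≤ B x x * B y y := by
  have hBp : (B.compl₁₂ p.subtype p.subtype).IsSymm :=
    LinearMap.isSymm_def.mpr fun u v => hB.eq u v
  exact LinearMap.BilinForm.apply_sq_le_of_symm (B.compl₁₂ p.subtype p.subtype)
    (fun z => hp z z.2) hBp ⟨x, hx⟩ ⟨y, hy⟩

lemma abs_apply_le_of_le_norm_sq {c : ℝ} (hc : 0 ≤ c) (hB : B.IsSymm) (hp : ∀ z ∈ p, 0 ≤ B z z)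
    (hle : ∀ z ∈ p, B z z ≤ c * ‖z‖ ^ 2) (hx : x ∈ p) (hy : y ∈ p) :
    |B x y| ≤ c * ‖x‖ * ‖y‖ := by
  apply abs_le_of_sq_le_sq _ (by positivity)
  calc B x y ^ 2 ≤ B x x * B y y := apply_sq_le_of_nonneg_on hB hp hx hy
    _ ≤ (c * ‖x‖ ^ 2) * (c * ‖y‖ ^ 2) :=
      mul_le_mul (hle x hx) (hle y hy) (hp y hy) (by positivity)
    _ = (c * ‖x‖ * ‖y‖) ^ 2 := by ring

lemma apply_sub_sub_le {c : ℝ} (hc : 0 ≤ c) (hB : B.IsSymm) (hp : ∀ z ∈ p, 0 ≤ B z z)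
    (hle : ∀ z ∈ p, B z z ≤ c * ‖z‖ ^ 2) (hx : x ∈ p) (hy : y ∈ p) :
    B (x - y) (x - y) ≤ B x x + 2 * c * ‖x‖ * ‖y‖ + c * ‖y‖ ^ 2 := by
  have hexp : B (x - y) (x - y) = B x x - 2 * B x y + B y y := by
    simp only [map_sub, LinearMap.sub_apply, hB.eq y x]
    ring
  have hxy := abs_le.mp (abs_apply_le_of_le_norm_sq hc hB hp hle hx hy)
  linarith [hle y hy]

end LinearMap.BilinForm

def signedPenalty (αp αm d : ℝ) : ℝ := αp * max d 0 + αm * max (-d) 0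

lemma mul_abs_le_signedPenalty {c αp αm : ℝ} (hp : c ≤ αp) (hm : c ≤ αm) (d : ℝ) :
    c * |d| ≤ signedPenalty αp αm d := by
  unfold signedPenalty
  rcases le_total 0 d with hd | hd
  · rw [abs_of_nonneg hd, max_eq_left hd, max_eq_right (neg_nonpos.mpr hd)]
    nlinarith
  · rw [abs_of_nonpos hd, max_eq_right hd, max_eq_left (neg_nonneg.mpr hd)]
    nlinarith

lemma signedPenalty_mul {s : ℝ} (hs : 0 ≤ s) (αp αm d : ℝ) :
    signedPenalty αp αm (s * d) = s * signedPenalty αp αm d := by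
  have hpos : max (s * d) 0 = s * max d 0 := by rw [mul_max_of_nonneg _ _ hs, mul_zero]
  have hneg : max (-(s * d)) 0 = s * max (-d) 0 := by
    rw [mul_max_of_nonneg _ _ hs, mul_zero, mul_neg]
  rw [signedPenalty, signedPenalty, hpos, hneg]
  ring

lemma le_of_forall_mem_Ioo_le_add_mul {a b k δ : ℝ} (hδ : 0 < δ)
    (h : ∀ s ∈ Set.Ioo 0 δ, a ≤ b + k * s) : a ≤ b := by
  have hcont : Continuous fun s : ℝ => b + k * s := by fun_prop
  have hlim : Filter.Tendsto (fun s => b + k * s) (nhdsWithin 0 (Set.Ioi 0)) (nhds b) :=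
    (hcont.tendsto' 0 b (by simp)).mono_left nhdsWithin_le_nhds
  exact ge_of_tendsto hlim (Filter.eventually_of_mem (Ioo_mem_nhdsGT hδ) h)

lemma mul_abs_eigenvalue_le_of_minimizer {c₀ c₂ αp αm μ₁ μ₂ : ℝ} (hc₀ : 0 ≤ c₀) (hc₂ : 0 ≤ c₂)
    {B : LinearMap.BilinForm ℝ (Matrix (Fin 2) (Fin 2) ℝ)} (hB : B.IsSymm)
    (hB₀ : ∀ X : Matrix (Fin 2) (Fin 2) ℝ, X.IsSymm → 0 ≤ B X X)
    (hB₂ : ∀ X : Matrix (Fin 2) (Fin 2) ℝ, X.IsSymm → B X X ≤ c₂ * ‖X‖ ^ 2)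
    (hαp : c₀ ≤ αp) (hαm : c₀ ≤ αm) {A Mstar : Matrix (Fin 2) (Fin 2) ℝ} (hA : A.IsSymm)
    (hMstar : Mstar.IsSymm)
    (hmin : ∀ M : Matrix (Fin 2) (Fin 2) ℝ, M.IsSymm →
      B (Mstar - A) (Mstar - A) + signedPenalty αp αm Mstar.det ≤
        B (M - A) (M - A) + signedPenalty αp αm M.det)
    (hμ₁ : μ₁ + μ₂ = Mstar.trace) (hμ₂ : μ₁ * μ₂ = Mstar.det) (hμ : |μ₁| ≤ |μ₂|) :
    c₀ * |μ₁| ≤ 2 * c₂ * ‖Mstar - A‖ := by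
  rcases eq_or_ne μ₁ 0 with rfl | hμ0
  · simp only [abs_zero, mul_zero]; positivity
  set r := ‖Mstar - A‖
  have hshrink : ∀ s ∈ Set.Ioo (0 : ℝ) 1, c₀ * |μ₂| ≤ 2 * c₂ * r + c₂ * |μ₁| * s := by
    rintro s ⟨hs0, hs1⟩
    obtain ⟨N, hN, hNnorm, hNdet⟩ := exists_norm_le_det_sub_eq hμ₁ hμ₂ (s * μ₁)
    rw [abs_mul, abs_of_pos hs0] at hNnorm
    have hdet : (Mstar - N).det = (1 - s) * Mstar.det := by rw [hNdet, ← hμ₂]; ring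
    have hcompare := hmin (Mstar - N) (hMstar.sub hN)
    rw [hdet, signedPenalty_mul (by linarith), sub_right_comm] at hcompare
    have hquad := LinearMap.BilinForm.apply_sub_sub_le (p := symmetricSubmodule ℝ (Fin 2))
      hc₂ hB hB₀ hB₂ (hMstar.sub hA) hN
    have hpen := mul_abs_le_signedPenalty hαp hαm Mstar.det
    refine le_of_mul_le_mul_left ?_ (by positivity : 0 < s * |μ₁|)
    calc s * |μ₁| * (c₀ * |μ₂|) = s * (c₀ * |Mstar.det|) := by rw [← hμ₂, abs_mul]; ring
      _ ≤ s * signedPenalty αp αm Mstar.det := by gcongr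
      _ ≤ 2 * c₂ * r * ‖N‖ + c₂ * ‖N‖ ^ 2 := by linarith
      _ ≤ 2 * c₂ * r * (s * |μ₁|) + c₂ * (s * |μ₁|) ^ 2 := by gcongr
      _ = s * |μ₁| * (2 * c₂ * r + c₂ * |μ₁| * s) := by ring
  calc c₀ * |μ₁| ≤ c₀ * |μ₂| := by gcongr
    _ ≤ 2 * c₂ * r := le_of_forall_mem_Ioo_le_add_mul one_pos hshrink

/-- every minimizer `M*` over symmetric matrices of
`f(M) = Q(M−A) + α⁺ (det M)⁺ + α⁻ (det M)⁻` satisfies `‖M* − A‖ ≥ c |κ₁|`,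
with `c > 0` depending only on `c₁, c₂, c₀`. The eigenvalues `κ₁, κ₂` of the
symmetric matrix `A` are encoded by `κ₁ + κ₂ = tr A`, `κ₁ κ₂ = det A`,
`|κ₁| ≤ |κ₂|`. -/
theorem stmt7 (c₁ c₂ c₀ : ℝ) (hc₁ : 0 < c₁) (hc₁₂ : c₁ ≤ c₂) (hc₀ : 0 < c₀) :
    ∃ c : ℝ, 0 < c ∧
      ∀ (Q : Matrix (Fin 2) (Fin 2) ℝ → ℝ)
        (B : Matrix (Fin 2) (Fin 2) ℝ →ₗ[ℝ] Matrix (Fin 2) (Fin 2) ℝ →ₗ[ℝ] ℝ),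
        (∀ X Y, B X Y = B Y X) → (∀ X, Q X = B X X) →
        (∀ M : Matrix (Fin 2) (Fin 2) ℝ, M.IsSymm → c₁ * frob2 M ^ 2 ≤ Q M) →
        (∀ M : Matrix (Fin 2) (Fin 2) ℝ, M.IsSymm → Q M ≤ c₂ * frob2 M ^ 2) →
        ∀ αp αm : ℝ, c₀ ≤ αp → c₀ ≤ αm →
        ∀ A : Matrix (Fin 2) (Fin 2) ℝ, A.IsSymm →
        ∀ κ₁ κ₂ : ℝ, κ₁ + κ₂ = A.trace → κ₁ * κ₂ = A.det → |κ₁| ≤ |κ₂| →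
        ∀ f : Matrix (Fin 2) (Fin 2) ℝ → ℝ,
        (∀ M, f M = Q (M - A) + αp * max M.det 0 + αm * max (-M.det) 0) →
        ∀ Mstar : Matrix (Fin 2) (Fin 2) ℝ, Mstar.IsSymm →
          (∀ M : Matrix (Fin 2) (Fin 2) ℝ, M.IsSymm → f Mstar ≤ f M) →
          c * |κ₁| ≤ frob2 (Mstar - A) := by
  have hc₂ : 0 < c₂ := hc₁.trans_le hc₁₂
  refine ⟨c₀ / (2 * c₂ + c₀), by positivity, ?_⟩
  intro Q B hBsymm hQB hlow hupp αp αm hαp hαm A hA κ₁ κ₂ hκ₁ hκ₂ hκ f hf Mstar hMstar hmin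
  simp only [frob2_eq_norm, hQB] at hlow hupp ⊢
  obtain ⟨μ₁, μ₂, hμ₁, hμ₂, hμ⟩ := hMstar.exists_eigenvalues_fin_two
  have hweyl := hA.abs_le_abs_add_norm_sub hκ₁ hκ₂ hκ hμ₁ hμ₂
  have hB₀ (X : Matrix (Fin 2) (Fin 2) ℝ) (hX : X.IsSymm) : 0 ≤ B X X :=
    (by positivity : 0 ≤ c₁ * ‖X‖ ^ 2).trans (hlow X hX)
  have hsmall := mul_abs_eigenvalue_le_of_minimizer hc₀.le hc₂.le
    (LinearMap.BilinForm.isSymm_def.mpr hBsymm) hB₀ hupp hαp hαm hA hMstar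
    (fun M hM => by simpa only [hf, hQB, signedPenalty, add_assoc] using hmin M hM) hμ₁ hμ₂ hμ
  rw [div_mul_eq_mul_div, div_le_iff₀ (by positivity)]
  linarith [mul_le_mul_of_nonneg_left hweyl hc₀.le]
end

section
/- Let A, B ∈ Sym₂(ℝ), let κ₁, κ₂ denote the eigenvalues of A ordered so that |κ₁| ≤ |κ₂|, and suppose det B = 0 and ‖B − A‖ < |κ₂|. Then |κ₁|·|κ₂| ≤ (√2 + 1)·|κ₂|·‖B − A‖; in particular ‖B − A‖ ≥ |κ₁|/(√2 + 1). -/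
/-!
Write `B = A + H`. For 2×2 matrices `det (A + H) = det A + tr (adj A · H) + det H`, so `det B = 0`
gives `|κ₁ κ₂| = |det A| ≤ ‖adj A‖ ‖H‖ + ‖H‖² / 2` by Cauchy–Schwarz. Since `‖adj A‖ = ‖A‖` and
`‖A‖² = κ₁² + κ₂² ≤ 2 κ₂²` for symmetric `A`, and `‖H‖ < |κ₂|`, the right-hand side is at most
`(√2 + 1) |κ₂| ‖H‖`.
-/

open Matrix

theorem det_add_fin_two {R : Type*} [CommRing R] (A H : Matrix (Fin 2) (Fin 2) R) :
    (A + H).det = A.det + (A.adjugate * H).trace + H.det := by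
  simp only [det_fin_two, adjugate_fin_two, trace_fin_two, mul_apply, Fin.sum_univ_two, Matrix.add_apply,
    of_apply, cons_val', cons_val_zero, cons_val_one, empty_val', cons_val_fin_one]
  ring

theorem frob2_nonneg (A : Matrix (Fin 2) (Fin 2) ℝ) : 0 ≤ frob2 A :=
  Real.sqrt_nonneg _

theorem frob2_sq (A : Matrix (Fin 2) (Fin 2) ℝ) :
    frob2 A ^ 2 = A 0 0 ^ 2 + A 0 1 ^ 2 + A 1 0 ^ 2 + A 1 1 ^ 2 := by
  rw [frob2, Real.sq_sqrt (by positivity)]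
  simp only [Fin.sum_univ_two]
  ring

theorem frob2_adjugate (A : Matrix (Fin 2) (Fin 2) ℝ) : frob2 A.adjugate = frob2 A := by
  rw [← sq_eq_sq₀ (frob2_nonneg _) (frob2_nonneg _), frob2_sq, frob2_sq, adjugate_fin_two]
  simp only [of_apply, cons_val', cons_val_zero, cons_val_one, empty_val', cons_val_fin_one]
  ring

theorem abs_trace_mul_le_frob2 (X Y : Matrix (Fin 2) (Fin 2) ℝ) :
    |(X * Y).trace| ≤ frob2 X * frob2 Y := by
  refine abs_le_of_sq_le_sq ?_ (mul_nonneg (frob2_nonneg X) (frob2_nonneg Y))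
  rw [mul_pow, frob2_sq, frob2_sq, trace_fin_two]
  simp only [mul_apply, Fin.sum_univ_two]
  nlinarith [sq_nonneg (X 0 0 * Y 1 0 - X 0 1 * Y 0 0), sq_nonneg (X 0 0 * Y 0 1 - X 1 0 * Y 0 0),
    sq_nonneg (X 0 0 * Y 1 1 - X 1 1 * Y 0 0), sq_nonneg (X 0 1 * Y 0 1 - X 1 0 * Y 1 0),
    sq_nonneg (X 0 1 * Y 1 1 - X 1 1 * Y 1 0), sq_nonneg (X 1 0 * Y 1 1 - X 1 1 * Y 0 1)]

theorem abs_det_le_frob2_sq_div_two (H : Matrix (Fin 2) (Fin 2) ℝ) :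
    |H.det| ≤ frob2 H ^ 2 / 2 := by
  rw [det_fin_two, frob2_sq, abs_le]
  constructor <;> nlinarith [sq_nonneg (H 0 0 + H 1 1), sq_nonneg (H 0 0 - H 1 1),
    sq_nonneg (H 0 1 + H 1 0), sq_nonneg (H 0 1 - H 1 0)]

theorem abs_det_le_of_det_add_eq_zero {A H : Matrix (Fin 2) (Fin 2) ℝ} (h : (A + H).det = 0) :
    |A.det| ≤ frob2 A * frob2 H + frob2 H ^ 2 / 2 := by
  have hA : A.det = -((A.adjugate * H).trace + H.det) := by
    rw [det_add_fin_two] at h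
    linear_combination h
  calc |A.det| ≤ |(A.adjugate * H).trace| + |H.det| := by rw [hA, abs_neg]; exact abs_add_le _ _
    _ ≤ frob2 A.adjugate * frob2 H + frob2 H ^ 2 / 2 :=
      add_le_add (abs_trace_mul_le_frob2 _ _) (abs_det_le_frob2_sq_div_two H)
    _ = frob2 A * frob2 H + frob2 H ^ 2 / 2 := by rw [frob2_adjugate]

theorem frob2_sq_eq_of_trace_of_det {A : Matrix (Fin 2) (Fin 2) ℝ} (hA : A.IsSymm) {κ₁ κ₂ : ℝ}
    (htr : κ₁ + κ₂ = A.trace) (hdet : κ₁ * κ₂ = A.det) : frob2 A ^ 2 = κ₁ ^ 2 + κ₂ ^ 2 := by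
  rw [trace_fin_two] at htr
  rw [det_fin_two, ← hA.apply 0 1] at hdet
  rw [frob2_sq, ← hA.apply 0 1]
  linear_combination 2 * hdet - (A 0 0 + A 1 1 + κ₁ + κ₂) * htr

theorem frob2_le_sqrt_two_mul_of_trace_of_det {A : Matrix (Fin 2) (Fin 2) ℝ} (hA : A.IsSymm)
    {κ₁ κ₂ : ℝ} (htr : κ₁ + κ₂ = A.trace) (hdet : κ₁ * κ₂ = A.det) (hord : |κ₁| ≤ |κ₂|) :
    frob2 A ≤ Real.sqrt 2 * |κ₂| := by
  have hsq : κ₁ ^ 2 ≤ κ₂ ^ 2 := sq_le_sq.mpr hord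
  refine abs_le_of_sq_le_sq' ?_ (by positivity) |>.2
  rw [frob2_sq_eq_of_trace_of_det hA htr hdet, mul_pow, Real.sq_sqrt zero_le_two, sq_abs]
  linarith

theorem stmt9_general (A B : Matrix (Fin 2) (Fin 2) ℝ) (hA : A.IsSymm)
    (κ₁ κ₂ : ℝ) (htr : κ₁ + κ₂ = A.trace) (hdet : κ₁ * κ₂ = A.det)
    (hord : |κ₁| ≤ |κ₂|) (hdetB : B.det = 0) (hclose : frob2 (B - A) < |κ₂|) :
    |κ₁| * |κ₂| ≤ (Real.sqrt 2 + 1) * |κ₂| * frob2 (B - A) ∧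
    |κ₁| / (Real.sqrt 2 + 1) ≤ frob2 (B - A) := by
  set F := frob2 (B - A)
  have hF : 0 ≤ F := frob2_nonneg _
  have hκ₂ : 0 < |κ₂| := hF.trans_lt hclose
  have hdetA := abs_det_le_of_det_add_eq_zero (H := B - A) (by rwa [add_sub_cancel])
  have hnormA := frob2_le_sqrt_two_mul_of_trace_of_det hA htr hdet hord
  have hmain : |κ₁| * |κ₂| ≤ (Real.sqrt 2 + 1) * |κ₂| * F :=
    calc |κ₁| * |κ₂| = |A.det| := by rw [← hdet, abs_mul]
      _ ≤ frob2 A * F + F ^ 2 / 2 := hdetA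
      _ ≤ Real.sqrt 2 * |κ₂| * F + |κ₂| * F := by gcongr; nlinarith
      _ = (Real.sqrt 2 + 1) * |κ₂| * F := by ring
  refine ⟨hmain, ?_⟩
  rw [div_le_iff₀ (by positivity), mul_comm F]
  exact le_of_mul_le_mul_right (by linarith) hκ₂

/-- if `A, B` are symmetric 2×2 matrices, `κ₁, κ₂` are the eigenvalues
of `A` (encoded by `κ₁ + κ₂ = tr A`, `κ₁ κ₂ = det A`, `|κ₁| ≤ |κ₂|`), `det B = 0` and
`‖B − A‖ < |κ₂|`, then `|κ₁| |κ₂| ≤ (√2 + 1) |κ₂| ‖B − A‖`; in particular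
`‖B − A‖ ≥ |κ₁| / (√2 + 1)`. -/
theorem stmt9 (A B : Matrix (Fin 2) (Fin 2) ℝ) (hA : A.IsSymm) (hB : B.IsSymm)
    (κ₁ κ₂ : ℝ) (htr : κ₁ + κ₂ = A.trace) (hdet : κ₁ * κ₂ = A.det)
    (hord : |κ₁| ≤ |κ₂|) (hdetB : B.det = 0) (hclose : frob2 (B - A) < |κ₂|) :
    |κ₁| * |κ₂| ≤ (Real.sqrt 2 + 1) * |κ₂| * frob2 (B - A) ∧
    |κ₁| / (Real.sqrt 2 + 1) ≤ frob2 (B - A) :=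
  stmt9_general A B hA κ₁ κ₂ htr hdet hord hdetB hclose
end

section
/- Let W : ℝ^{3×3} → ℝ satisfy: (a) frame indifference, W(R·F) = W(F) for every R ∈ SO(3) and F ∈ ℝ^{3×3}; (b) coercivity, W(F) ≥ c·dist(F, SO(3))² for every F ∈ ℝ^{3×3}, for some c > 0; and (c) there exist a quadratic form Q₃ on ℝ^{3×3} and a function ω : [0,∞) → [0,∞] with ω(t)/t² → 0 as t → 0⁺ such that |W(I + B) − Q₃(B)| ≤ ω(‖B‖) for every B ∈ ℝ^{3×3}. Then Q₃(B) = Q₃(sym B) and Q₃(B) ≥ c·‖sym B‖² for every B ∈ ℝ^{3×3}. -/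
open Matrix

/-- The Frobenius norm of a real 3×3 matrix. -/
noncomputable def frob3 (A : Matrix (Fin 3) (Fin 3) ℝ) : ℝ :=
  Real.sqrt (∑ i, ∑ j, A i j ^ 2)

/-- The set of rotations of ℝ³. -/
def SO3 : Set (Matrix (Fin 3) (Fin 3) ℝ) := {R | Rᵀ * R = 1 ∧ R.det = 1}

/-- The Frobenius distance from a matrix to `SO(3)`. -/
noncomputable def distSO3 (F : Matrix (Fin 3) (Fin 3) ℝ) : ℝ :=
  sInf ((fun R => frob3 (F - R)) '' SO3)

/-- The symmetric part of a 3×3 matrix. -/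
noncomputable def symPart3 (X : Matrix (Fin 3) (Fin 3) ℝ) : Matrix (Fin 3) (Fin 3) ℝ :=
  (1 / 2 : ℝ) • (X + Xᵀ)

/-!
Along every curve `g t = t X + o(t)` with `X ≠ 0`, the expansion of `W` at the identity gives
`W (1 + g t) / t² → Q₃ X`. Write `X = a + s` with `a` skew and `s` symmetric. The curves
`exp (t a) (1 + t s) - 1` and `t s` have tangents `X` and `s` and, by frame indifference, the same
energy; hence `Q₃ X = Q₃ s`. Coercivity gives `W (1 + t s) ≥ c dist(1 + t s, SO(3))²`, and
`dist(1 + t s, SO(3)) = t ‖s‖ + O(t²)`, so `Q₃ s ≥ c ‖s‖²`.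
-/
open Filter Topology Asymptotics

section SecondOrder

variable {E : Type*} [NormedAddCommGroup E]

lemma isLittleO_of_ennreal_bound {f : E → ℝ} {ω : ℝ → ENNReal}
    (hω : Tendsto (fun t => ω t / ENNReal.ofReal (t ^ 2)) (𝓝[>] 0) (𝓝 0))
    (hf : ∀ Y, ENNReal.ofReal |f Y| ≤ ω ‖Y‖) :
    f =o[𝓝[≠] 0] fun Y => ‖Y‖ ^ 2 := by
  refine isLittleO_iff.2 fun ε hε => ?_
  filter_upwards [tendsto_norm_nhdsNE_zero.eventually
    (ENNReal.tendsto_nhds_zero.1 hω _ (ENNReal.ofReal_pos.2 hε)), self_mem_nhdsWithin]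
    with Y hY hY0
  have hpos : 0 < ‖Y‖ ^ 2 := by have := norm_pos_iff.2 hY0; positivity
  rw [ENNReal.div_le_iff_le_mul (Or.inl (ENNReal.ofReal_pos.2 hpos).ne')
    (Or.inl ENNReal.ofReal_ne_top), ← ENNReal.ofReal_mul hε.le] at hY
  rw [Real.norm_eq_abs, norm_pow, norm_norm]
  exact (ENNReal.ofReal_le_ofReal_iff (by positivity)).1 ((hf Y).trans hY)

variable [NormedSpace ℝ E] [FiniteDimensional ℝ E]

lemma continuous_bilin_diag (B : E →ₗ[ℝ] E →ₗ[ℝ] ℝ) : Continuous fun Y => B Y Y := by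
  let B' : E →L[ℝ] E →L[ℝ] ℝ :=
    LinearMap.toContinuousLinearMap (LinearMap.toContinuousLinearMap.toLinearMap ∘ₗ B)
  exact B'.continuous₂.comp (continuous_id.prodMk continuous_id)

lemma tendsto_div_sq_of_isLittleO {f : E → ℝ} {B : E →ₗ[ℝ] E →ₗ[ℝ] ℝ}
    (hf : (fun Y => f Y - B Y Y) =o[𝓝[≠] 0] fun Y => ‖Y‖ ^ 2)
    {g : ℝ → E} {X : E} (hX : X ≠ 0) (hg : Tendsto (fun t => t⁻¹ • g t) (𝓝[>] 0) (𝓝 X)) :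
    Tendsto (fun t => f (g t) / t ^ 2) (𝓝[>] 0) (𝓝 (B X X)) := by
  have hpos : ∀ᶠ t in 𝓝[>] (0 : ℝ), t ≠ 0 :=
    eventually_mem_nhdsWithin.mono fun t ht => ne_of_gt ht
  have hg0 : Tendsto g (𝓝[>] 0) (𝓝[≠] 0) := by
    refine tendsto_nhdsWithin_iff.2 ⟨?_, ?_⟩
    · have := (tendsto_nhdsWithin_of_tendsto_nhds (tendsto_id (x := 𝓝 (0:ℝ)))).smul hg
      rw [zero_smul] at this
      refine this.congr' (hpos.mono fun t ht => ?_)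
      simp [smul_smul, ht]
    · filter_upwards [hpos, hg.eventually_ne hX] with t ht hv
      exact fun h0 => hv (by rw [h0, smul_zero])
  have hnorm : (fun t => ‖g t‖ ^ 2) =O[𝓝[>] 0] fun t => t ^ 2 := by
    have := ((hg.norm.pow 2).isBigO_one ℝ).mul (isBigO_refl (fun t : ℝ => t ^ 2) (𝓝[>] 0))
    simp only [one_mul] at this
    refine this.congr' (hpos.mono fun t ht => ?_) EventuallyEq.rfl
    simp only [norm_smul, norm_inv, Real.norm_eq_abs]
    field_simp
    rw [sq_abs, mul_comm]
  have hrem := ((hf.comp_tendsto hg0).trans_isBigO hnorm).tendsto_div_nhds_zero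
  have hquad : Tendsto (fun t => B (t⁻¹ • g t) (t⁻¹ • g t)) (𝓝[>] 0) (𝓝 (B X X)) :=
    ((continuous_bilin_diag B).tendsto X).comp hg
  rw [← zero_add (B X X)]
  refine (hrem.add hquad).congr' (hpos.mono fun t ht => ?_)
  simp only [Function.comp_apply, map_smul, LinearMap.smul_apply, smul_eq_mul]
  field_simp
  ring

end SecondOrder

attribute [local instance] Matrix.frobeniusNormedRing Matrix.frobeniusNormedAlgebra

local notation "M3" => Matrix (Fin 3) (Fin 3) ℝ

lemma frob3_eq_norm (A : M3) : frob3 A = ‖A‖ := by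
  rw [Matrix.frobenius_norm_def, frob3, Real.sqrt_eq_rpow]
  congr 1
  refine Finset.sum_congr rfl fun i _ => Finset.sum_congr rfl fun j _ => ?_
  rw [Real.norm_eq_abs, show (2 : ℝ) = ((2 : ℕ) : ℝ) by norm_num, Real.rpow_natCast, sq_abs]

lemma one_mem_SO3 : (1 : M3) ∈ SO3 := ⟨by simp, by simp⟩

lemma distSO3_le {F R : M3} (hR : R ∈ SO3) : distSO3 F ≤ ‖F - R‖ := by
  rw [← frob3_eq_norm]
  refine csInf_le ⟨0, ?_⟩ ⟨R, hR, rfl⟩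
  rintro _ ⟨R', -, rfl⟩
  exact Real.sqrt_nonneg _

lemma le_distSO3 {F : M3} {d : ℝ} (h : ∀ R ∈ SO3, d ≤ ‖F - R‖) : d ≤ distSO3 F := by
  refine le_csInf ⟨_, 1, one_mem_SO3, rfl⟩ ?_
  rintro _ ⟨R, hR, rfl⟩
  simpa only [frob3_eq_norm] using h R hR

lemma isSymm_symPart3 (X : M3) : (symPart3 X).IsSymm := by
  rw [Matrix.IsSymm, symPart3, transpose_smul, transpose_add, transpose_transpose, add_comm]

lemma transpose_sub_symPart3 (X : M3) : (X - symPart3 X)ᵀ = -(X - symPart3 X) := by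
  rw [transpose_sub, (isSymm_symPart3 X).eq, symPart3]
  module

lemma norm_symPart3_le (M : M3) : ‖symPart3 M‖ ≤ ‖M‖ := by
  rw [symPart3, norm_smul]
  calc ‖(1 / 2 : ℝ)‖ * ‖M + Mᵀ‖ ≤ 1 / 2 * (‖M‖ + ‖Mᵀ‖) := by
        rw [Real.norm_of_nonneg (by norm_num)]
        gcongr
        exact norm_add_le _ _
    _ = ‖M‖ := by rw [frobenius_norm_transpose]; ring

/-- The rotation `R = 1 + E` satisfies `E + Eᵀ = -EᵀE`, so the symmetric part of
`S - E` is `S + EᵀE/2`; this gives `‖S‖ - ‖E‖²/2 ≤ ‖1 + S - R‖`, while `‖E‖ ≤ ‖1 + S - R‖ + ‖S‖`. -/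
lemma norm_sub_two_mul_sq_le_norm_one_add_sub {S R : M3} (hS : S.IsSymm) (hR : R ∈ SO3) :
    ‖S‖ - 2 * ‖S‖ ^ 2 ≤ ‖1 + S - R‖ := by
  set E := R - 1
  have hdiff : 1 + S - R = S - E := by simp only [E]; abel
  have hsym : symPart3 (S - E) = S + (1 / 2 : ℝ) • (Eᵀ * E) := by
    have hRR : Rᵀ * R = 1 := hR.1
    have hEE : (Rᵀ - 1) * (R - 1) = Rᵀ * R - Rᵀ - R + 1 := by noncomm_ring
    simp only [symPart3, E, transpose_sub, transpose_one, hS.eq, hEE, hRR]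
    module
  have hlow : ‖S‖ - 1 / 2 * ‖E‖ ^ 2 ≤ ‖1 + S - R‖ := by
    have hEE : ‖(1 / 2 : ℝ) • (Eᵀ * E)‖ ≤ 1 / 2 * ‖E‖ ^ 2 := by
      rw [norm_smul, Real.norm_of_nonneg (by norm_num)]
      gcongr
      calc ‖Eᵀ * E‖ ≤ ‖Eᵀ‖ * ‖E‖ := frobenius_norm_mul _ _
        _ = ‖E‖ ^ 2 := by rw [frobenius_norm_transpose, sq]
    calc ‖S‖ - 1 / 2 * ‖E‖ ^ 2 ≤ ‖S + (1 / 2 : ℝ) • (Eᵀ * E)‖ := by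
          have := norm_sub_le (S + (1 / 2 : ℝ) • (Eᵀ * E)) ((1 / 2 : ℝ) • (Eᵀ * E))
          rw [add_sub_cancel_right] at this
          linarith
      _ ≤ ‖1 + S - R‖ := by rw [← hsym, hdiff]; exact norm_symPart3_le _
  have hE : ‖E‖ ≤ ‖1 + S - R‖ + ‖S‖ := by
    rw [hdiff]
    simpa using norm_sub_le (S - E) S
  rcases le_or_gt ‖S‖ ‖1 + S - R‖ with h | h
  · nlinarith [norm_nonneg S]
  · nlinarith [norm_nonneg E, norm_nonneg (1 + S - R)]

lemma tendsto_distSO3_one_add_smul_div {s : M3} (hs : s.IsSymm) :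
    Tendsto (fun t => distSO3 (1 + t • s) / t) (𝓝[>] 0) (𝓝 ‖s‖) := by
  have hlow : Tendsto (fun t => ‖s‖ - 2 * t * ‖s‖ ^ 2) (𝓝[>] 0) (𝓝 ‖s‖) := by
    have : Continuous fun t : ℝ => ‖s‖ - 2 * t * ‖s‖ ^ 2 := by fun_prop
    simpa using (this.tendsto 0).mono_left nhdsWithin_le_nhds
  refine tendsto_of_tendsto_of_tendsto_of_le_of_le' hlow tendsto_const_nhds ?_ ?_ <;>
    filter_upwards [self_mem_nhdsWithin] with t (ht : 0 < t)
  · have hts : ‖t • s‖ = t * ‖s‖ := by rw [norm_smul, Real.norm_of_nonneg ht.le]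
    rw [le_div_iff₀ ht]
    refine le_distSO3 fun R hR => ?_
    have := norm_sub_two_mul_sq_le_norm_one_add_sub (hs.smul t) hR
    rw [hts] at this
    linarith
  · rw [div_le_iff₀ ht]
    calc distSO3 (1 + t • s) ≤ ‖1 + t • s - 1‖ := distSO3_le one_mem_SO3
      _ = ‖s‖ * t := by rw [add_sub_cancel_left, norm_smul, Real.norm_of_nonneg ht.le, mul_comm]

lemma exp_mem_SO3 {a : M3} (ha : aᵀ = -a) : NormedSpace.exp a ∈ SO3 := by
  have horth : (NormedSpace.exp a)ᵀ * NormedSpace.exp a = 1 := by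
    rw [← Matrix.exp_transpose, ha, Matrix.exp_neg]
    exact Matrix.nonsing_inv_mul _ ((Matrix.isUnit_iff_isUnit_det _).1 (Matrix.isUnit_exp a))
  refine ⟨horth, ?_⟩
  have hsq : (NormedSpace.exp a).det ^ 2 = 1 := by
    rw [sq]
    conv_lhs => enter [1]; rw [← det_transpose]
    rw [← det_mul, horth, det_one]
  -- `exp a` is the square of `exp (a / 2)`, which rules out determinant `-1`.
  have hnonneg : 0 ≤ (NormedSpace.exp a).det := by
    rw [show a = (1 / 2 : ℝ) • a + (1 / 2 : ℝ) • a by module,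
      Matrix.exp_add_of_commute _ _ (Commute.refl _), det_mul]
    exact mul_self_nonneg _
  nlinarith

lemma hasDerivAt_exp_smul_zero (a : M3) :
    HasDerivAt (fun t : ℝ => NormedSpace.exp (t • a)) a 0 := by
  have := hasDerivAt_exp_smul_const' (𝕂 := ℝ) a 0
  rw [zero_smul, NormedSpace.exp_zero, mul_one] at this
  exact this

section Energy

variable {W : M3 → ℝ} {B : M3 →ₗ[ℝ] M3 →ₗ[ℝ] ℝ}

lemma tendsto_apply_one_add_smul_div_sq
    (hW : (fun Y => W (1 + Y) - B Y Y) =o[𝓝[≠] 0] fun Y => ‖Y‖ ^ 2) {s : M3} (hs : s ≠ 0) :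
    Tendsto (fun t => W (1 + t • s) / t ^ 2) (𝓝[>] 0) (𝓝 (B s s)) :=
  tendsto_div_sq_of_isLittleO (f := fun Y => W (1 + Y)) hW hs <|
    tendsto_const_nhds.congr' <| eventually_mem_nhdsWithin.mono fun t (ht : 0 < t) => by
      simp [smul_smul, ht.ne']

/-- Along the curve `exp (t a) (1 + t s) = 1 + t (a + s) + O(t²)` the energy equals
`W (1 + t s)` by frame indifference. -/
lemma bilin_add_skew_of_ne_zero (hframe : ∀ R ∈ SO3, ∀ F : M3, W (R * F) = W F)
    (hW : (fun Y => W (1 + Y) - B Y Y) =o[𝓝[≠] 0] fun Y => ‖Y‖ ^ 2)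
    {a s : M3} (ha : aᵀ = -a) (hs : s.IsSymm) (hs0 : s ≠ 0) :
    B (a + s) (a + s) = B s s := by
  set R := fun t : ℝ => NormedSpace.exp (t • a)
  have hR := hasDerivAt_exp_smul_zero a
  have hslope : Tendsto (fun t => t⁻¹ • (R t - 1)) (𝓝[>] 0) (𝓝 a) := by
    have := (hasDerivAt_iff_tendsto_slope.1 hR).mono_left
      (nhdsWithin_mono (s := Set.Ioi 0) _ fun t ht => ne_of_gt ht)
    refine this.congr fun t => ?_
    rw [slope_def_module, sub_zero, zero_smul, NormedSpace.exp_zero]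
  have hR1 : Tendsto R (𝓝[>] 0) (𝓝 1) := by
    have := hR.continuousAt.tendsto.mono_left (nhdsWithin_le_nhds (s := Set.Ioi 0))
    rw [zero_smul, NormedSpace.exp_zero] at this
    exact this
  have hcurve : Tendsto (fun t => t⁻¹ • (R t * (1 + t • s) - 1)) (𝓝[>] 0) (𝓝 (a + s)) := by
    have := hslope.add (hR1.mul_const s)
    rw [one_mul] at this
    refine this.congr' (eventually_mem_nhdsWithin.mono fun t (ht : 0 < t) => ?_)
    show _ = t⁻¹ • (R t * (1 + t • s) - 1)
    rw [mul_add, mul_one, Matrix.mul_smul, add_sub_right_comm, smul_add, smul_smul,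
      inv_mul_cancel₀ ht.ne', one_smul]
  have has0 : a + s ≠ 0 := by
    intro h
    have ht : (a + s)ᵀ = 0 := by rw [h, transpose_zero]
    rw [transpose_add, ha, hs.eq, neg_add_eq_zero] at ht
    rw [ht, ← two_smul ℝ, smul_eq_zero] at h
    exact hs0 (h.resolve_left two_ne_zero)
  have hlim := tendsto_div_sq_of_isLittleO (f := fun Y => W (1 + Y)) hW has0 hcurve
  refine tendsto_nhds_unique (hlim.congr fun t => ?_) (tendsto_apply_one_add_smul_div_sq hW hs0)
  rw [add_sub_cancel, hframe _ (exp_mem_SO3 ?_)]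
  rw [transpose_smul, ha, smul_neg]

/-- The expansion of `W` says nothing at `Y = 0`, so this case is reduced to `s = ±1` through the
parallelogram law `B (a + 1) (a + 1) + B (a - 1) (a - 1) = 2 B a a + 2 B 1 1`. -/
lemma bilin_skew_self_eq_zero (hframe : ∀ R ∈ SO3, ∀ F : M3, W (R * F) = W F)
    (hW : (fun Y => W (1 + Y) - B Y Y) =o[𝓝[≠] 0] fun Y => ‖Y‖ ^ 2)
    {a : M3} (ha : aᵀ = -a) : B a a = 0 := by
  have hplus := bilin_add_skew_of_ne_zero hframe hW ha isSymm_one one_ne_zero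
  have hminus :=
    bilin_add_skew_of_ne_zero hframe hW ha isSymm_one.neg (neg_ne_zero.2 one_ne_zero)
  simp only [map_add, map_neg, LinearMap.add_apply, LinearMap.neg_apply] at hplus hminus
  linarith

lemma bilin_add_skew (hframe : ∀ R ∈ SO3, ∀ F : M3, W (R * F) = W F)
    (hW : (fun Y => W (1 + Y) - B Y Y) =o[𝓝[≠] 0] fun Y => ‖Y‖ ^ 2)
    {a s : M3} (ha : aᵀ = -a) (hs : s.IsSymm) :
    B (a + s) (a + s) = B s s := by
  rcases eq_or_ne s 0 with rfl | hs0
  · simpa using bilin_skew_self_eq_zero hframe hW ha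
  · exact bilin_add_skew_of_ne_zero hframe hW ha hs hs0

lemma mul_norm_sq_le_bilin {c : ℝ} (hcoer : ∀ F : M3, c * distSO3 F ^ 2 ≤ W F)
    (hW : (fun Y => W (1 + Y) - B Y Y) =o[𝓝[≠] 0] fun Y => ‖Y‖ ^ 2)
    {s : M3} (hs : s.IsSymm) : c * ‖s‖ ^ 2 ≤ B s s := by
  rcases eq_or_ne s 0 with rfl | hs0
  · simp
  refine le_of_tendsto_of_tendsto' (((tendsto_distSO3_one_add_smul_div hs).pow 2).const_mul c)
    (tendsto_apply_one_add_smul_div_sq hW hs0) fun t => ?_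
  rw [div_pow, ← mul_div_assoc]
  exact div_le_div_of_nonneg_right (hcoer _) (sq_nonneg t)

end Energy

theorem stmt11_general (W : Matrix (Fin 3) (Fin 3) ℝ → ℝ)
    (hframe : ∀ R ∈ SO3, ∀ F : Matrix (Fin 3) (Fin 3) ℝ, W (R * F) = W F)
    (c : ℝ) (hcoer : ∀ F : Matrix (Fin 3) (Fin 3) ℝ, c * distSO3 F ^ 2 ≤ W F)
    (B : Matrix (Fin 3) (Fin 3) ℝ →ₗ[ℝ] Matrix (Fin 3) (Fin 3) ℝ →ₗ[ℝ] ℝ)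
    (Q₃ : Matrix (Fin 3) (Fin 3) ℝ → ℝ) (hQ₃ : ∀ X, Q₃ X = B X X)
    (ω : ℝ → ENNReal)
    (hω : Filter.Tendsto (fun t : ℝ => ω t / ENNReal.ofReal (t ^ 2))
      (nhdsWithin 0 (Set.Ioi 0)) (nhds 0))
    (hbound : ∀ X : Matrix (Fin 3) (Fin 3) ℝ,
      ENNReal.ofReal |W (1 + X) - Q₃ X| ≤ ω (frob3 X)) :
    ∀ X : Matrix (Fin 3) (Fin 3) ℝ,
      Q₃ X = Q₃ (symPart3 X) ∧ c * frob3 (symPart3 X) ^ 2 ≤ Q₃ X := by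
  have hW : (fun Y : M3 => W (1 + Y) - B Y Y) =o[𝓝[≠] 0] fun Y => ‖Y‖ ^ 2 :=
    isLittleO_of_ennreal_bound hω fun Y => by simpa only [hQ₃, frob3_eq_norm] using hbound Y
  intro X
  have hQX : Q₃ X = Q₃ (symPart3 X) := by
    rw [hQ₃, hQ₃, ← bilin_add_skew hframe hW (transpose_sub_symPart3 X) (isSymm_symPart3 X),
      sub_add_cancel]
  refine ⟨hQX, ?_⟩
  rw [hQX, hQ₃, frob3_eq_norm]
  exact mul_norm_sq_le_bilin hcoer hW (isSymm_symPart3 X)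

/-- if `W` is frame indifferent, coercive with constant `c` with respect
to the squared Frobenius distance to `SO(3)`, and admits a quadratic form `Q₃`
(given by a symmetric bilinear form `B`) with `|W(I + X) − Q₃(X)| ≤ ω(‖X‖)` where
`ω : [0,∞) → [0,∞]` satisfies `ω(t)/t² → 0` as `t → 0⁺`, then
`Q₃(X) = Q₃(sym X)` and `Q₃(X) ≥ c ‖sym X‖²` for every `X`. -/
theorem stmt11 (W : Matrix (Fin 3) (Fin 3) ℝ → ℝ)
    (hframe : ∀ R ∈ SO3, ∀ F : Matrix (Fin 3) (Fin 3) ℝ, W (R * F) = W F)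
    (c : ℝ) (hc : 0 < c) (hcoer : ∀ F : Matrix (Fin 3) (Fin 3) ℝ, c * distSO3 F ^ 2 ≤ W F)
    (B : Matrix (Fin 3) (Fin 3) ℝ →ₗ[ℝ] Matrix (Fin 3) (Fin 3) ℝ →ₗ[ℝ] ℝ)
    (hBsymm : ∀ X Y, B X Y = B Y X)
    (Q₃ : Matrix (Fin 3) (Fin 3) ℝ → ℝ) (hQ₃ : ∀ X, Q₃ X = B X X)
    (ω : ℝ → ENNReal)
    (hω : Filter.Tendsto (fun t : ℝ => ω t / ENNReal.ofReal (t ^ 2))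
      (nhdsWithin 0 (Set.Ioi 0)) (nhds 0))
    (hbound : ∀ X : Matrix (Fin 3) (Fin 3) ℝ,
      ENNReal.ofReal |W (1 + X) - Q₃ X| ≤ ω (frob3 X)) :
    ∀ X : Matrix (Fin 3) (Fin 3) ℝ,
      Q₃ X = Q₃ (symPart3 X) ∧ c * frob3 (symPart3 X) ^ 2 ≤ Q₃ X :=
  stmt11_general W hframe c hcoer B Q₃ hQ₃ ω hω hbound
end

section
/- Let κ ≠ 0, n ≠ 0 be real numbers, let w > 0 and δ > 0, and suppose that 1 − κw x₂ > 0 and g(x₂) := (δ² + 1)(1 − κw x₂)² − 1 > 0 for every x₂ ∈ (−1/2, 1/2). Define on (−1/2,1/2) the symmetric 2×2 matrix field ĨI with entries ĨI₁₁(x₂) = δn·√(g(x₂)), ĨI₁₂(x₂) = ĨI₂₁(x₂) = δn/(1 − κw x₂), and ĨI₂₂(x₂) = δn/((1 − κw x₂)²·√(g(x₂))). Then ĨI satisfies the rescaled Gauss–Codazzi system with constant geodesic curvature κ: (i) det ĨI(x₂) = 0 for all x₂; (ii) (1 − κw x₂)·(1/w)·(d/dx₂)ĨI₁₁(x₂)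 = −κ·ĨI₁₁(x₂) − κ(1 − κw x₂)²·ĨI₂₂(x₂); (iii) (1 − κw x₂)·(1/w)·(d/dx₂)ĨI₁₂(x₂) = κ·ĨI₁₂(x₂). -/
/-! Along the ansatz the three entries are explicit functions of `t = 1 - κ w x₂` alone, with
`s = √g` satisfying `s² = (δ² + 1) t² - 1`. The determinant vanishes identically
(`ĨI₁₁ ĨI₂₂ = (δn)² / t² = ĨI₁₂²`), and after differentiating by the chain rule both Codazzi
equations reduce to polynomial identities in `t` and `s`, the first one modulo `s² = (δ² + 1) t² - 1`. -/

section RibbonAnsatz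

variable {A c x : ℝ}

theorem hasDerivAt_one_sub_mul : HasDerivAt (fun y : ℝ => 1 - c * y) (-c) x := by
  simpa using ((hasDerivAt_id x).const_mul c).const_sub 1

theorem hasDerivAt_sqrt_mul_one_sub_mul_sq_sub_one (h : A * (1 - c * x) ^ 2 - 1 ≠ 0) :
    HasDerivAt (fun y : ℝ => √(A * (1 - c * y) ^ 2 - 1))
      (-(A * c * (1 - c * x)) / √(A * (1 - c * x) ^ 2 - 1)) x := by
  have hg : HasDerivAt (fun y : ℝ => A * (1 - c * y) ^ 2 - 1)
      (A * (2 * (1 - c * x) * -c)) x := by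
    simpa using ((hasDerivAt_one_sub_mul.pow 2).const_mul A).sub_const 1
  exact (hg.sqrt h).congr_deriv (by field_simp)

theorem hasDerivAt_div_one_sub_mul (a : ℝ) (h : 1 - c * x ≠ 0) :
    HasDerivAt (fun y : ℝ => a / (1 - c * y)) (a * c / (1 - c * x) ^ 2) x :=
  ((hasDerivAt_const x a).div hasDerivAt_one_sub_mul h).congr_deriv (by ring)

end RibbonAnsatz

theorem stmt14_general (κ n w δ : ℝ) (hw : 0 < w)
    (g : ℝ → ℝ) (hg : ∀ x : ℝ, g x = (δ ^ 2 + 1) * (1 - κ * w * x) ^ 2 - 1)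
    (hgpos : ∀ x ∈ Set.Ioo (-(1/2) : ℝ) (1/2), 0 < g x)
    (I11 I12 I22 : ℝ → ℝ)
    (h11 : ∀ x : ℝ, I11 x = δ * n * Real.sqrt (g x))
    (h12 : ∀ x : ℝ, I12 x = δ * n / (1 - κ * w * x))
    (h22 : ∀ x : ℝ, I22 x = δ * n / ((1 - κ * w * x) ^ 2 * Real.sqrt (g x))) :
    ∀ x ∈ Set.Ioo (-(1/2) : ℝ) (1/2),
      I11 x * I22 x - I12 x ^ 2 = 0 ∧
      (1 - κ * w * x) * ((1 / w) * deriv I11 x) =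
        -κ * I11 x - κ * (1 - κ * w * x) ^ 2 * I22 x ∧
      (1 - κ * w * x) * ((1 / w) * deriv I12 x) = κ * I12 x := by
  intro x hx
  have hgx := hgpos x hx
  rw [hg] at hgx
  have ht : 1 - κ * w * x ≠ 0 := by
    rintro ht
    rw [ht] at hgx
    norm_num at hgx
  have hs : 0 < √((δ ^ 2 + 1) * (1 - κ * w * x) ^ 2 - 1) := Real.sqrt_pos.mpr hgx
  have hs2 := Real.sq_sqrt hgx.le
  have hD11 : deriv I11 x = δ * n * (-((δ ^ 2 + 1) * (κ * w) * (1 - κ * w * x)) /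
      √((δ ^ 2 + 1) * (1 - κ * w * x) ^ 2 - 1)) := by
    simp_rw [funext h11, hg]
    exact ((hasDerivAt_sqrt_mul_one_sub_mul_sq_sub_one hgx.ne').const_mul _).deriv
  have hD12 : deriv I12 x = δ * n * (κ * w) / (1 - κ * w * x) ^ 2 := by
    rw [funext h12]
    exact (hasDerivAt_div_one_sub_mul _ ht).deriv
  have hw0 := hw.ne'
  simp only [hD11, hD12, h11, h12, h22, hg]
  set t := 1 - κ * w * x
  set s := √((δ ^ 2 + 1) * t ^ 2 - 1)
  refine ⟨?_, ?_, ?_⟩ <;> field_simp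
  · ring
  · linear_combination (δ * n * κ) * hs2

/-- the explicit wide-ribbon ansatz for the geometry
`a = diag((1−κz₂)²,1)`, `II = diag(0,n)` satisfies the rescaled Gauss–Codazzi
system with constant geodesic curvature `κ`: zero determinant and the two
rescaled Codazzi equations. -/
theorem stmt14 (κ n w δ : ℝ) (hκ : κ ≠ 0) (hn : n ≠ 0) (hw : 0 < w) (hδ : 0 < δ)
    (hpos : ∀ x ∈ Set.Ioo (-(1/2) : ℝ) (1/2), 0 < 1 - κ * w * x)
    (g : ℝ → ℝ) (hg : ∀ x : ℝ, g x = (δ ^ 2 + 1) * (1 - κ * w * x) ^ 2 - 1)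
    (hgpos : ∀ x ∈ Set.Ioo (-(1/2) : ℝ) (1/2), 0 < g x)
    (I11 I12 I22 : ℝ → ℝ)
    (h11 : ∀ x : ℝ, I11 x = δ * n * Real.sqrt (g x))
    (h12 : ∀ x : ℝ, I12 x = δ * n / (1 - κ * w * x))
    (h22 : ∀ x : ℝ, I22 x = δ * n / ((1 - κ * w * x) ^ 2 * Real.sqrt (g x))) :
    ∀ x ∈ Set.Ioo (-(1/2) : ℝ) (1/2),
      I11 x * I22 x - I12 x ^ 2 = 0 ∧
      (1 - κ * w * x) * ((1 / w) * deriv I11 x) =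
        -κ * I11 x - κ * (1 - κ * w * x) ^ 2 * I22 x ∧
      (1 - κ * w * x) * ((1 / w) * deriv I12 x) = κ * I12 x :=
  stmt14_general κ n w δ hw g hg hgpos I11 I12 I22 h11 h12 h22
end
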